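/- Let m be a positive natural number, let v ∈ ℝ^m, let L : {-1,1}^m → ℝ be any function, and let a, b ∈ ℝ with a > b > 0. Then max_{g ∈ {-1,1}^m} ( a ∑_i g_i v_i + L(g) ) − max_{h ∈ {-1,1}^m} a ∑_i h_i v_i ≤ max_{g ∈ {-1,1}^m} ( b ∑_i g_i v_i + L(g) ) − max_{h ∈ {-1,1}^m} b ∑_i h_i v_i. -/

import Mathlib

/-!
Over the cube, `max_h c ⟨h, v⟩ = c ∑ |vᵢ|` for `c ≥ 0`, attained at the sign vector of `v`.
Since `⟨g, v⟩ ≤ ∑ |vᵢ|` for every `g` in the cube, raising the scale from `b` to `a` raises each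
term `c ⟨g, v⟩ + L g`, hence their maximum, by at most `(a - b) ∑ |vᵢ|`, which is exactly the
increase of the subtracted maximum.
-/

/-- The hypercube `{-1,1}^m` as a subset of `ℝ^m`. -/
def Hc (m : ℕ) : Set (Fin m → ℝ) := {h | ∀ i, h i = 1 ∨ h i = -1}

lemma Hc_finite (m : ℕ) : (Hc m).Finite :=
  (Set.Finite.pi fun _ => ((Set.finite_singleton (-1 : ℝ)).insert 1)).subset
    fun _ hg i _ => hg i

lemma Hc_nonempty (m : ℕ) : (Hc m).Nonempty := ⟨fun _ => 1, fun _ => Or.inl rfl⟩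

lemma sum_mul_le_sum_abs_of_mem_Hc {m : ℕ} (v : Fin m → ℝ) {g : Fin m → ℝ} (hg : g ∈ Hc m) :
    ∑ i, g i * v i ≤ ∑ i, |v i| :=
  Finset.sum_le_sum fun i _ => by
    rcases hg i with h | h <;> simp only [h, one_mul, neg_one_mul]
    exacts [le_abs_self _, neg_le_abs _]

lemma sum_mul_eq_sum_abs_of_sign (m : ℕ) (v : Fin m → ℝ) :
    ∑ i, (if 0 ≤ v i then 1 else -1) * v i = ∑ i, |v i| :=
  Finset.sum_congr rfl fun i _ => by
    split_ifs with h
    · rw [one_mul, abs_of_nonneg h]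
    · rw [neg_one_mul, abs_of_neg (not_le.mp h)]

lemma sSup_image_mul_sum_Hc (m : ℕ) (v : Fin m → ℝ) {c : ℝ} (hc : 0 ≤ c) :
    sSup ((fun h => c * ∑ i, h i * v i) '' Hc m) = c * ∑ i, |v i| := by
  refine IsGreatest.csSup_eq ⟨⟨fun i => if 0 ≤ v i then 1 else -1, fun i => ?_, ?_⟩, ?_⟩
  · exact (em (0 ≤ v i)).imp (if_pos ·) (if_neg ·)
  · exact congrArg (c * ·) (sum_mul_eq_sum_abs_of_sign m v)
  · rintro _ ⟨g, hg, rfl⟩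
    exact mul_le_mul_of_nonneg_left (sum_mul_le_sum_abs_of_mem_Hc v hg) hc

lemma Set.Finite.csSup_image_le_csSup_image_add {α : Type*} {s : Set α} (hs : s.Finite)
    (hne : s.Nonempty) {f g : α → ℝ} {d : ℝ} (hfg : ∀ x ∈ s, f x ≤ g x + d) :
    sSup (f '' s) ≤ sSup (g '' s) + d :=
  csSup_le (hne.image f) <| by
    rintro _ ⟨x, hx, rfl⟩
    exact (hfg x hx).trans (add_le_add_left (le_csSup (hs.image g).bddAbove ⟨x, hx, rfl⟩) d)

theorem stmt_4_general (m : ℕ) (v : Fin m → ℝ)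
    (L : (Fin m → ℝ) → ℝ) (a b : ℝ) (hba : b < a) (hb : 0 < b) :
    sSup ((fun g => a * ∑ i, g i * v i + L g) '' Hc m) -
        sSup ((fun h => a * ∑ i, h i * v i) '' Hc m) ≤
      sSup ((fun g => b * ∑ i, g i * v i + L g) '' Hc m) -
        sSup ((fun h => b * ∑ i, h i * v i) '' Hc m) := by
  rw [sSup_image_mul_sum_Hc m v (hb.trans hba).le, sSup_image_mul_sum_Hc m v hb.le]
  have hmax := (Hc_finite m).csSup_image_le_csSup_image_add (Hc_nonempty m)
    (f := fun g => a * ∑ i, g i * v i + L g) (g := fun g => b * ∑ i, g i * v i + L g)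
    (d := (a - b) * ∑ i, |v i|) fun g hg => by
      have := mul_le_mul_of_nonneg_left (sum_mul_le_sum_abs_of_mem_Hc v hg) (sub_nonneg.2 hba.le)
      linarith
  linarith

/-- Proposition 1: the structured-prediction upper bound gets tighter as the
scale increases, i.e. for `a > b > 0` the bound at scale `a` is at most the
bound at scale `b`. -/
theorem stmt_4 (m : ℕ) (hm : 0 < m) (v : Fin m → ℝ)
    (L : (Fin m → ℝ) → ℝ) (a b : ℝ) (hba : b < a) (hb : 0 < b) :
    sSup ((fun g => a * ∑ i, g i * v i + L g) '' Hc m) -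
        sSup ((fun h => a * ∑ i, h i * v i) '' Hc m) ≤
      sSup ((fun g => b * ∑ i, g i * v i + L g) '' Hc m) -
        sSup ((fun h => b * ∑ i, h i * v i) '' Hc m) :=
  stmt_4_general m v L a b hba hb
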